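/- Let {b_n} be a sequence of integers and {a_n} a sequence of positive integers with a_n > 1 eventually and lim |b_n|/(a_{n-1} a_n) = 0. Assume additionally that eventually b_n > 0 and a_{n+1} ≥ a_n, that the sequence (b_{n+1} − b_n)/a_n converges with limit ≤ 0, and that liminf a_n/b_n = 0. Then ∑_{n=1}^∞ b_n / (∏_{i=1}^n a_i) is irrational. -/

import Mathlib

/-
Suppose the sum `S` equals `p / q`. The scaled remainders
`R n = a 0 ⋯ a (n-1) * (S - ∑ k < n, b k / (a 0 ⋯ a k))` satisfy `R (n+1) = a n * R n - b n`,
so the numbers `q * R n` are integers, and they are eventually positive. With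
`c n = b n / (a n - 1)` the recurrence becomes `R (n+1) - c n = a n * (R n - c n)`; as
`R n / (a 0 ⋯ a (n-1))` tends to `0`, this forces `|R n - c n| ≤ 2ε` eventually, where `ε` bounds
`b n / (a (n-1) * a n)` and `(b (n+1) - b n) / a n`. Hence the increments of `R` are below
`6ε < 1 / q`, so the integers `q * R n` eventually stop increasing and `b n / a n ≤ c n` stays
bounded; and `R n ≥ 1 / q` keeps `c n`, hence `b n / a n`, away from `0`. So `a n / b n` is
eventually trapped in a compact subinterval of `(0, ∞)`, and its liminf is positive.
-/

open Filter Finset Topology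

namespace ErdosStraus

noncomputable def cantorSeriesTerm (a b : ℕ → ℝ) (n : ℕ) : ℝ :=
  b n / ∏ i ∈ range (n + 1), a i

/-- When `S` is the sum of the series, this is `a 0 ⋯ a (n-1)` times its tail from `n` on. -/
noncomputable def scaledRemainder (a b : ℕ → ℝ) (S : ℝ) (n : ℕ) : ℝ :=
  (∏ i ∈ range n, a i) * (S - ∑ k ∈ range n, cantorSeriesTerm a b k)

section

variable {a b : ℕ → ℝ} {S : ℝ}

@[simp]
lemma scaledRemainder_zero : scaledRemainder a b S 0 = S := by
  simp [scaledRemainder]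

lemma scaledRemainder_succ (ha : ∀ n, a n ≠ 0) (n : ℕ) :
    scaledRemainder a b S (n + 1) = a n * scaledRemainder a b S n - b n := by
  have hP : ∏ i ∈ range n, a i ≠ 0 := prod_ne_zero_iff.mpr fun i _ => ha i
  have han := ha n
  simp only [scaledRemainder, sum_range_succ, cantorSeriesTerm, prod_range_succ (fun i => a i) n]
  field_simp
  ring

lemma nonpos_of_mul_le_succ {w v : ℕ → ℝ} {m : ℕ} (ha : ∀ n, 0 < a n)
    (hv : Tendsto v atTop (𝓝 0)) (hwv : ∀ n ≥ m, w n ≤ (∏ i ∈ range n, a i) * v n)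
    (hw : ∀ n ≥ m, a n * w n ≤ w (n + 1)) : w m ≤ 0 := by
  have hP : ∀ n, 0 < ∏ i ∈ range n, a i := fun n => prod_pos fun i _ => ha i
  have hmono : ∀ n ≥ m, w m / ∏ i ∈ range m, a i ≤ w n / ∏ i ∈ range n, a i := by
    intro n hn
    induction n, hn using Nat.le_induction with
    | base => rfl
    | succ n hn ih =>
      refine ih.trans ?_
      rw [prod_range_succ, div_le_div_iff₀ (hP n) (mul_pos (hP n) (ha n))]
      calc w n * ((∏ i ∈ range n, a i) * a n) = a n * w n * ∏ i ∈ range n, a i := by ring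
        _ ≤ w (n + 1) * ∏ i ∈ range n, a i := mul_le_mul_of_nonneg_right (hw n hn) (hP n).le
  have hle : w m / ∏ i ∈ range m, a i ≤ 0 := by
    refine ge_of_tendsto hv ?_
    filter_upwards [eventually_ge_atTop m] with n hn
    exact (hmono n hn).trans ((div_le_iff₀' (hP n)).mpr (hwv n hn))
  simpa using (div_le_iff₀ (hP m)).mp hle

lemma tendsto_sub_sum_cantorSeriesTerm (hS : HasSum (cantorSeriesTerm a b) S) :
    Tendsto (fun n => S - ∑ k ∈ range n, cantorSeriesTerm a b k) atTop (𝓝 0) := by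
  simpa using hS.tendsto_sum_nat.const_sub S

lemma scaledRemainder_pos (ha : ∀ n, 0 < a n) (hS : HasSum (cantorSeriesTerm a b) S) {N : ℕ}
    (hb : ∀ n ≥ N, 0 < b n) {n : ℕ} (hn : N ≤ n) : 0 < scaledRemainder a b S n := by
  have hsucc := scaledRemainder_succ (S := S) (b := b) (fun n => (ha n).ne')
  have hnonneg : ∀ m ≥ N, 0 ≤ scaledRemainder a b S m := by
    intro m hm
    have := nonpos_of_mul_le_succ (w := fun n => -scaledRemainder a b S n) (m := m) ha
      (by simpa using (tendsto_sub_sum_cantorSeriesTerm hS).neg)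
      (fun n _ => le_of_eq (by simp only [scaledRemainder]; ring))
      (fun n hn => by rw [hsucc]; linarith [hb n (hm.trans hn)])
    linarith
  have := hnonneg (n + 1) (by omega)
  rw [hsucc] at this
  exact pos_of_mul_pos_right (by linarith [hb n hn]) (ha n).le

lemma scaledRemainder_succ_sub (ha : ∀ n, a n ≠ 0) {n : ℕ} (ha1 : a n ≠ 1) :
    scaledRemainder a b S (n + 1) - b n / (a n - 1) =
      a n * (scaledRemainder a b S n - b n / (a n - 1)) := by
  have : a n - 1 ≠ 0 := sub_ne_zero.mpr ha1
  rw [scaledRemainder_succ ha]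
  field_simp
  ring

lemma scaledRemainder_sub_le (ha : ∀ n, 0 < a n) (hS : HasSum (cantorSeriesTerm a b) S)
    {N : ℕ} {δ : ℝ} (hδ : 0 ≤ δ) (h2 : ∀ n ≥ N, 2 ≤ a n) (hb : ∀ n ≥ N, 0 ≤ b n)
    (hc : ∀ n ≥ N, b (n + 1) / (a (n + 1) - 1) ≤ b n / (a n - 1) + δ) {n : ℕ} (hn : N ≤ n) :
    scaledRemainder a b S n - b n / (a n - 1) ≤ δ := by
  suffices scaledRemainder a b S n - b n / (a n - 1) - δ ≤ 0 by linarith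
  refine nonpos_of_mul_le_succ (w := fun n => scaledRemainder a b S n - b n / (a n - 1) - δ) ha
    (tendsto_sub_sum_cantorSeriesTerm hS) (fun m hm => ?_) (fun m hm => ?_)
  · have : 0 ≤ b m / (a m - 1) := div_nonneg (hb m (hn.trans hm)) (by linarith [h2 m (hn.trans hm)])
    simp only [scaledRemainder] at *
    linarith
  · have hm2 := h2 m (hn.trans hm)
    have hid := scaledRemainder_succ_sub (S := S) (b := b) (fun n => (ha n).ne') (n := m)
      (by linarith)
    have := hc m (hn.trans hm)
    nlinarith

end

lemma exists_int_eq_mul_scaledRemainder {a b : ℕ → ℤ} {S : ℝ} (ha : ∀ n, a n ≠ 0) {q : ℤ}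
    (hS : ∃ m : ℤ, (m : ℝ) = q * S) (n : ℕ) :
    ∃ m : ℤ, (m : ℝ) = q * scaledRemainder (fun i => (a i : ℝ)) (fun i => (b i : ℝ)) S n := by
  induction n with
  | zero => simpa using hS
  | succ n ih =>
    obtain ⟨m, hm⟩ := ih
    refine ⟨a n * m - q * b n, ?_⟩
    push_cast
    rw [scaledRemainder_succ (fun i => Int.cast_ne_zero.mpr (ha i)), hm]
    ring

lemma summable_cantorSeriesTerm {a b : ℕ → ℝ} {N : ℕ} {C : ℝ} (ha : ∀ n, 0 < a n)
    (h2 : ∀ n ≥ N, 2 ≤ a n) (hb : ∀ n ≥ N, |b (n + 1)| ≤ C * (a n * a (n + 1))) :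
    Summable (cantorSeriesTerm a b) := by
  have hP : ∀ n, 0 < ∏ i ∈ range n, a i := fun n => prod_pos fun i _ => ha i
  have hgeom : Summable fun n => C * (∏ i ∈ range n, a i)⁻¹ := by
    refine (summable_of_ratio_norm_eventually_le (r := 2⁻¹) (by norm_num) ?_).mul_left C
    filter_upwards [eventually_ge_atTop N] with n hn
    rw [prod_range_succ, mul_inv, norm_mul, norm_inv, norm_inv, Real.norm_of_nonneg (hP n).le,
      Real.norm_of_nonneg (ha n).le, mul_comm]
    refine mul_le_mul_of_nonneg_right ?_ (inv_nonneg.mpr (hP n).le)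
    exact inv_anti₀ two_pos (h2 n hn)
  refine (summable_nat_add_iff 1).mp (hgeom.of_norm_bounded_eventually_nat ?_)
  filter_upwards [eventually_ge_atTop N] with n hn
  rw [cantorSeriesTerm, Real.norm_eq_abs, abs_div, abs_of_pos (hP _), prod_range_succ,
    prod_range_succ, div_le_iff₀ (mul_pos (mul_pos (hP n) (ha n)) (ha (n + 1)))]
  calc |b (n + 1)| ≤ C * (a n * a (n + 1)) := hb n hn
    _ = _ := by field_simp [(hP n).ne']

lemma div_sub_one_le_div_sub_one_add {x y u v ε : ℝ} (hε : 0 ≤ ε) (hx : 2 ≤ x) (hxy : x ≤ y)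
    (hv : 0 ≤ v) (hvu : v - u ≤ ε * x) : v / (y - 1) ≤ u / (x - 1) + 2 * ε := by
  have hx1 : 0 < x - 1 := by linarith
  calc v / (y - 1) ≤ v / (x - 1) := by gcongr
    _ ≤ (u + ε * x) / (x - 1) := by gcongr; linarith
    _ ≤ u / (x - 1) + 2 * ε := by
      rw [add_div, add_le_add_iff_left, div_le_iff₀ hx1]
      nlinarith

structure ErdosStrausCondition (a b : ℕ → ℝ) (ε : ℝ) (N : ℕ) : Prop where
  two_le : ∀ n ≥ N, 2 ≤ a n
  pos : ∀ n ≥ N, 0 < b n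
  mono : ∀ n ≥ N, a n ≤ a (n + 1)
  abs_le : ∀ n ≥ N, |b (n + 1)| ≤ ε * (a n * a (n + 1))
  sub_le : ∀ n ≥ N, b (n + 1) - b n ≤ ε * a n

section

variable {a b : ℕ → ℝ} {S ε : ℝ} {N : ℕ}

lemma ErdosStrausCondition.nonneg (h : ErdosStrausCondition a b ε N) : 0 ≤ ε := by
  have h2 := h.two_le N le_rfl
  have h2' := h.two_le (N + 1) (by omega)
  exact nonneg_of_mul_nonneg_left ((abs_nonneg _).trans (h.abs_le N le_rfl))
    (mul_pos (by linarith) (by linarith))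

lemma abs_scaledRemainder_sub_le (ha : ∀ n, 0 < a n) (hS : HasSum (cantorSeriesTerm a b) S)
    (h : ErdosStrausCondition a b ε N) {n : ℕ} (hn : N + 1 ≤ n) :
    |scaledRemainder a b S n - b n / (a n - 1)| ≤ 2 * ε := by
  obtain ⟨m, rfl⟩ : ∃ m, n = m + 1 := ⟨n - 1, by omega⟩
  have hm : N ≤ m := by omega
  have hε := h.nonneg
  have hupper := scaledRemainder_sub_le ha hS (by positivity) h.two_le (fun n hn => (h.pos n hn).le)
    (fun n hn => div_sub_one_le_div_sub_one_add hε (h.two_le n hn) (h.mono n hn)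
      (h.pos (n + 1) (by omega)).le (h.sub_le n hn)) (show N ≤ m + 1 by omega)
  have hpos := scaledRemainder_pos ha hS h.pos (show N ≤ m + 2 by omega)
  have h2 := h.two_le (m + 1) (by omega)
  have hid := scaledRemainder_succ_sub (S := S) (b := b) (fun n => (ha n).ne') (n := m + 1)
    (by linarith)
  have hcsmall : b (m + 1) / (a (m + 1) - 1) ≤ 2 * ε * a (m + 1) := by
    rw [div_le_iff₀ (by linarith)]
    have := (le_abs_self _).trans (h.abs_le m hm)
    have hεa := mul_nonneg hε (ha (m + 1)).le
    nlinarith [mul_nonneg hεa (sub_nonneg.mpr (h.mono m hm)), mul_nonneg hεa (sub_nonneg.mpr h2)]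
  rw [abs_le]
  refine ⟨?_, hupper⟩
  nlinarith [ha (m + 1)]

lemma scaledRemainder_le (ha : ∀ n, 0 < a n) (hS : HasSum (cantorSeriesTerm a b) S) {q : ℝ}
    (hq : 0 < q) (hint : ∀ n, ∃ m : ℤ, (m : ℝ) = q * scaledRemainder a b S n) (hεq : 6 * q * ε < 1)
    (h : ErdosStrausCondition a b ε N) {n : ℕ} (hn : N + 1 ≤ n) :
    scaledRemainder a b S n ≤ scaledRemainder a b S (N + 1) := by
  choose M hM using hint
  induction n, hn using Nat.le_induction with
  | base => rfl
  | succ n hn ih =>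
    refine le_trans ?_ ih
    have hg := abs_le.mp (abs_scaledRemainder_sub_le ha hS h hn)
    have hg' := abs_le.mp (abs_scaledRemainder_sub_le ha hS h (n := n + 1) (by omega))
    have hc := div_sub_one_le_div_sub_one_add h.nonneg (h.two_le n (by omega)) (h.mono n (by omega))
      (h.pos (n + 1) (by omega)).le (h.sub_le n (by omega))
    have hMle : M (n + 1) ≤ M n := by
      have : (M (n + 1) : ℝ) < M n + 1 := by rw [hM, hM]; nlinarith
      exact_mod_cast Int.lt_add_one_iff.mp (by exact_mod_cast this)
    have : q * scaledRemainder a b S (n + 1) ≤ q * scaledRemainder a b S n := by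
      rw [← hM, ← hM]; exact_mod_cast hMle
    exact le_of_mul_le_mul_left this hq

lemma liminf_div_pos (ha : ∀ n, 0 < a n) (hS : HasSum (cantorSeriesTerm a b) S) {q : ℝ}
    (hq : 0 < q) (hint : ∀ n, ∃ m : ℤ, (m : ℝ) = q * scaledRemainder a b S n)
    (hεq : 6 * q * ε < 1) (h : ErdosStrausCondition a b ε N) :
    0 < liminf (fun n => a n / b n) atTop := by
  set B := scaledRemainder a b S (N + 1) + 2 * ε
  have hbounds : ∀ n ≥ N + 1, b n / a n ≤ B ∧ 1 - 2 * q * ε ≤ 2 * q * (b n / a n) := by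
    intro n hn
    have h2 := h.two_le n (by omega)
    have hb := h.pos n (by omega)
    have hg := abs_le.mp (abs_scaledRemainder_sub_le ha hS h hn)
    have hR := scaledRemainder_le ha hS hq hint hεq h hn
    have hRq : 1 ≤ q * scaledRemainder a b S n := by
      obtain ⟨m, hm⟩ := hint n
      have hm0 : (0 : ℝ) < m := hm ▸ mul_pos hq (scaledRemainder_pos ha hS h.pos (by omega))
      rw [← hm]
      exact_mod_cast (show (0 : ℤ) < m by exact_mod_cast hm0)
    have hlow : b n / a n ≤ b n / (a n - 1) := by gcongr <;> linarith
    have hhigh : b n / (a n - 1) ≤ 2 * (b n / a n) := by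
      rw [← mul_div_assoc, div_le_div_iff₀ (by linarith) (by linarith)]
      nlinarith
    constructor
    · linarith
    · nlinarith
  have hpos : ∀ n ≥ N + 1, 0 < b n / a n := fun n hn => div_pos (h.pos n (by omega)) (ha n)
  have hB : 0 < B := (hpos (N + 1) le_rfl).trans_le (hbounds (N + 1) le_rfl).1
  have hκ : 0 < 1 - 2 * q * ε := by nlinarith [h.nonneg]
  refine (inv_pos.mpr hB).trans_le (le_liminf_of_le ?_ ?_)
  · -- without the upper bound, `liminf` could be the junk value `0` of a sequence tending to `∞`
    refine isCoboundedUnder_ge_of_eventually_le atTop (x := 2 * q / (1 - 2 * q * ε)) ?_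
    filter_upwards [eventually_ge_atTop (N + 1)] with n hn
    rw [← inv_div, inv_le_comm₀ (hpos n hn) (by positivity), inv_div, div_le_iff₀' (by positivity)]
    exact (hbounds n hn).2
  · filter_upwards [eventually_ge_atTop (N + 1)] with n hn
    rw [← inv_div]
    exact inv_anti₀ (hpos n hn) (hbounds n hn).1

end

end ErdosStraus

open ErdosStraus

theorem erdos_straus_cor_2_10 (a b : ℕ → ℤ)
    (ha : ∀ n, 0 < a n) (ha1 : ∀ᶠ n in atTop, 1 < a n)
    (hlim : Tendsto (fun n => |(b n : ℝ)| / ((a (n - 1) : ℝ) * (a n : ℝ))) atTop (nhds 0))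
    (hev : ∀ᶠ n in atTop, 0 < b n ∧ a n ≤ a (n + 1))
    (hconv : ∃ L : ℝ, L ≤ 0 ∧
      Tendsto (fun n => ((b (n + 1) : ℝ) - (b n : ℝ)) / (a n : ℝ)) atTop (nhds L))
    (hliminf : Filter.liminf (fun n => (a n : ℝ) / (b n : ℝ)) atTop = 0) :
    Irrational (∑' n : ℕ, (b n : ℝ) / ∏ i ∈ Finset.range (n + 1), (a i : ℝ)) := by
  rintro ⟨r, hr⟩
  have haR : ∀ n, (0 : ℝ) < a n := fun n => by exact_mod_cast ha n
  set q : ℝ := ((r.den : ℤ) : ℝ)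
  have hq : 0 < q := by positivity
  set ε : ℝ := (8 * q)⁻¹
  have hε : 0 < ε := by positivity
  have hsmall : ∀ᶠ n in atTop, |(b (n + 1) : ℝ)| ≤ ε * (a n * a (n + 1)) := by
    filter_upwards [((tendsto_add_atTop_iff_nat 1).mpr hlim).eventually (gt_mem_nhds hε)] with n hn
    rw [Nat.add_sub_cancel, div_lt_iff₀ (mul_pos (haR n) (haR (n + 1)))] at hn
    exact hn.le
  obtain ⟨L, hL, hconvL⟩ := hconv
  have hstep : ∀ᶠ n in atTop, (b (n + 1) : ℝ) - b n ≤ ε * a n := by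
    filter_upwards [hconvL.eventually (gt_mem_nhds (hL.trans_lt hε))] with n hn
    exact ((div_lt_iff₀ (haR n)).mp hn).le
  obtain ⟨N, hN⟩ := eventually_atTop.mp (ha1.and (hev.and (hsmall.and hstep)))
  have h : ErdosStrausCondition (fun n => a n) (fun n => b n) ε N :=
    { two_le := fun n hn => by exact_mod_cast (hN n hn).1
      pos := fun n hn => by exact_mod_cast (hN n hn).2.1.1
      mono := fun n hn => by exact_mod_cast (hN n hn).2.1.2
      abs_le := fun n hn => (hN n hn).2.2.1
      sub_le := fun n hn => (hN n hn).2.2.2 }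
  have hS : HasSum (cantorSeriesTerm (fun n => a n) (fun n => b n)) r := by
    rw [hr]
    exact (summable_cantorSeriesTerm haR h.two_le h.abs_le).hasSum
  have hint := exists_int_eq_mul_scaledRemainder (b := b) (S := r) (q := r.den)
    (fun n => (ha n).ne') ⟨r.num, by exact_mod_cast (Rat.den_mul_eq_num r).symm⟩
  have hpos := liminf_div_pos haR hS hq hint (by simp only [ε]; field_simp; norm_num) h
  exact hpos.ne' hliminf
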